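/- arXiv:2307.09921 — 5 statements merged into one kernel-verified Lean document; each statement's English description precedes it below -/
import Mathlib

section
/- Let g be L-smooth with minimizer value g* and iterates x_{k+1} = x_k − (1/L)d(x_k), where d is an inexact gradient with error Δ = L₁₂γ > 0. Suppose g(x₀) − g* ≤ C₁. If for all k = 0, …, N−1 the criterion ‖d(x_k)‖ ≤ √6·L₁₂γ fails (i.e. ‖d(x_k)‖ > √6·L₁₂γ for all such k), then N ≤ 2C₁L/(L₁₂²γ²). Equivalently, the stopping criterion ‖d(x_k)‖ ≤ √6·L₁₂γ is reached within at most ⌈2C₁L/(L₁₂²γ²)⌉ iterations. -/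
open InnerProductSpace

lemma descent_lemma {n : ℕ} (g : EuclideanSpace ℝ (Fin n) → ℝ) (L : ℝ)
    (hdiff : Differentiable ℝ g) (hL : 0 < L)
    (hLip : ∀ x y, ‖gradient g x - gradient g y‖ ≤ L * ‖x - y‖)
    (x v : EuclideanSpace ℝ (Fin n)) :
    g (x + v) ≤ g x + ⟪gradient g x, v⟫_ℝ + L / 2 * ‖v‖ ^ 2 := by
  set φ : ℝ → ℝ := fun t => g (x + t • v) - t * ⟪gradient g x, v⟫_ℝ - L * t ^ 2 / 2 * ‖v‖ ^ 2
    with hφ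
  have hderiv : ∀ t : ℝ, HasDerivAt φ
      (⟪gradient g (x + t • v), v⟫_ℝ - ⟪gradient g x, v⟫_ℝ - L * t * ‖v‖ ^ 2) t := by
    intro t
    have hc : HasDerivAt (fun t : ℝ => x + t • v) v t := by
      simpa using ((hasDerivAt_id t).smul_const v).const_add x
    have hg : HasFDerivAt g (toDual ℝ _ (gradient g (x + t • v))) (x + t • v) :=
      ((hdiff (x + t • v)).hasGradientAt).hasFDerivAt
    have h1 : HasDerivAt (fun t : ℝ => g (x + t • v)) (⟪gradient g (x + t • v), v⟫_ℝ) t := by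
      simpa [toDual_apply_apply, Function.comp_def] using hg.comp_hasDerivAt t hc
    have h2 : HasDerivAt (fun t : ℝ => t * ⟪gradient g x, v⟫_ℝ) (⟪gradient g x, v⟫_ℝ) t := by
      simpa using (hasDerivAt_id t).mul_const _
    have h3 : HasDerivAt (fun t : ℝ => L * t ^ 2 / 2 * ‖v‖ ^ 2) (L * t * ‖v‖ ^ 2) t := by
      have := (((hasDerivAt_pow 2 t).const_mul L).div_const 2).mul_const (‖v‖ ^ 2)
      refine this.congr_deriv ?_
      rw [show (2:ℕ) - 1 = 1 from rfl]; push_cast; ring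
    exact (h1.sub h2).sub h3
  have hanti : AntitoneOn φ (Set.Icc 0 1) := by
    apply antitoneOn_of_deriv_nonpos (convex_Icc 0 1)
    · exact Continuous.continuousOn (by
        have : Continuous φ := by
          apply Continuous.sub
          apply Continuous.sub
          · exact hdiff.continuous.comp (by continuity)
          · continuity
          · continuity
        exact this)
    · intro t ht
      exact (hderiv t).differentiableAt.differentiableWithinAt
    · intro t ht
      rw [interior_Icc] at ht
      rw [(hderiv t).deriv]
      have hb : ⟪gradient g (x + t • v) - gradient g x, v⟫_ℝ ≤ L * t * ‖v‖ ^ 2 := by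
        calc ⟪gradient g (x + t • v) - gradient g x, v⟫_ℝ
            ≤ ‖gradient g (x + t • v) - gradient g x‖ * ‖v‖ := real_inner_le_norm _ _
          _ ≤ (L * ‖(x + t • v) - x‖) * ‖v‖ := by
              apply mul_le_mul_of_nonneg_right (hLip _ _) (norm_nonneg _)
          _ = L * (|t| * ‖v‖) * ‖v‖ := by rw [add_sub_cancel_left, norm_smul]; simp
          _ = L * t * ‖v‖ ^ 2 := by rw [abs_of_pos ht.1]; ring
      rw [inner_sub_left] at hb
      linarith
  have h01 : φ 1 ≤ φ 0 := hanti (by norm_num) (by norm_num) (by norm_num)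
  simp only [hφ, one_smul, zero_smul, add_zero, one_pow] at h01
  linarith

lemma key_ineq (Δ t : ℝ) (hΔ : 0 < Δ) (ht : Real.sqrt 6 * Δ < t) :
    Δ ^ 2 ≤ t ^ 2 - 2 * Δ * t := by
  have hs6 : Real.sqrt 6 ^ 2 = 6 := Real.sq_sqrt (by norm_num)
  have hs2 : (2 : ℝ) ≤ Real.sqrt 6 := by nlinarith [Real.sqrt_nonneg 6]
  have hs25 : 2 * Real.sqrt 6 ≤ 5 := by nlinarith [Real.sqrt_nonneg 6]
  have hprod : 0 ≤ (t - Real.sqrt 6 * Δ) * (t + (Real.sqrt 6 - 2) * Δ) := by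
    have h1 : 0 ≤ (Real.sqrt 6 - 2) * Δ := mul_nonneg (by linarith) hΔ.le
    have h2 : 0 < Real.sqrt 6 * Δ := by nlinarith
    nlinarith
  nlinarith [hprod, hs6, sq_nonneg Δ]

theorem stmt_6 {n : ℕ} (g : EuclideanSpace ℝ (Fin n) → ℝ) (gstar L L₁₂ γ C₁ : ℝ)
    (hdiff : Differentiable ℝ g) (hL : 0 < L) (hL₁₂ : 0 < L₁₂) (hγ : 0 < γ)
    (hLip : ∀ x y, ‖gradient g x - gradient g y‖ ≤ L * ‖x - y‖)
    (hlb : ∀ x, gstar ≤ g x)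
    (d : EuclideanSpace ℝ (Fin n) → EuclideanSpace ℝ (Fin n))
    (hd : ∀ x, ‖d x - gradient g x‖ ≤ L₁₂ * γ)
    (x : ℕ → EuclideanSpace ℝ (Fin n))
    (hiter : ∀ k, x (k + 1) = x k - (1 / L) • d (x k))
    (hC₁ : g (x 0) - gstar ≤ C₁)
    (N : ℕ)
    (hfail : ∀ k < N, Real.sqrt 6 * L₁₂ * γ < ‖d (x k)‖) :
    (N : ℝ) ≤ 2 * C₁ * L / (L₁₂ ^ 2 * γ ^ 2) := by
  set Δ : ℝ := L₁₂ * γ with hΔdef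
  have hΔ : 0 < Δ := mul_pos hL₁₂ hγ
  -- per-step decrease
  have hstep : ∀ k < N, g (x (k + 1)) + Δ ^ 2 / (2 * L) ≤ g (x k) := by
    intro k hk
    set y := x k
    set D := d y with hD
    have hxk1 : x (k + 1) = y + (-(1 / L)) • D := by
      rw [hiter k]; module
    have hdes := descent_lemma g L hdiff hL hLip y ((-(1 / L)) • D)
    rw [← hxk1] at hdes
    have hinner : ⟪gradient g y, (-(1 / L)) • D⟫_ℝ
        = -(1 / L) * (⟪D, D⟫_ℝ - ⟪D - gradient g y, D⟫_ℝ) := by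
      rw [real_inner_smul_right, inner_sub_left]
      ring
    have herr : ⟪D - gradient g y, D⟫_ℝ ≤ Δ * ‖D‖ := by
      calc ⟪D - gradient g y, D⟫_ℝ ≤ ‖D - gradient g y‖ * ‖D‖ := real_inner_le_norm _ _
        _ ≤ Δ * ‖D‖ := mul_le_mul_of_nonneg_right (hd y) (norm_nonneg _)
    have hDD : ⟪D, D⟫_ℝ = ‖D‖ ^ 2 := real_inner_self_eq_norm_sq _
    have hnorm : ‖(-(1 / L)) • D‖ ^ 2 = (1 / L) ^ 2 * ‖D‖ ^ 2 := by
      rw [norm_smul]; simp [mul_pow]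
    have hbig : Real.sqrt 6 * Δ < ‖D‖ := by
      have := hfail k hk
      rw [hΔdef]; linarith [this]
    have hkey : Δ ^ 2 ≤ ‖D‖ ^ 2 - 2 * Δ * ‖D‖ := key_ineq Δ ‖D‖ hΔ hbig
    -- combine
    have h1 : g (x (k + 1)) ≤ g y - (1 / L) * (‖D‖ ^ 2 - Δ * ‖D‖)
        + L / 2 * ((1 / L) ^ 2 * ‖D‖ ^ 2) := by
      rw [hinner, hDD] at hdes
      rw [hnorm] at hdes
      have h1L : (0:ℝ) < 1 / L := by positivity
      have herr' : 1 / L * ⟪D - gradient g y, D⟫_ℝ ≤ 1 / L * (Δ * ‖D‖) :=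
        mul_le_mul_of_nonneg_left herr h1L.le
      have e0 : -(1 / L) * (‖D‖ ^ 2 - ⟪D - gradient g y, D⟫_ℝ)
          = -(1 / L * ‖D‖ ^ 2) + 1 / L * ⟪D - gradient g y, D⟫_ℝ := by ring
      have e0' : -((1 / L) * (‖D‖ ^ 2 - Δ * ‖D‖))
          = -(1 / L * ‖D‖ ^ 2) + 1 / L * (Δ * ‖D‖) := by ring
      linarith [hdes, herr', e0, e0']
    have hLpos : (0:ℝ) < 2 * L := by linarith
    have hLne : L ≠ 0 := ne_of_gt hL
    have e1 : L / 2 * ((1/L)^2 * ‖D‖^2) = ‖D‖^2 / (2*L) := by field_simp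
    have e3 : 1/L * (‖D‖^2 - Δ*‖D‖) - ‖D‖^2/(2*L) = (‖D‖^2 - 2*Δ*‖D‖)/(2*L) := by
      field_simp; ring
    have hmono : Δ^2/(2*L) ≤ (‖D‖^2 - 2*Δ*‖D‖)/(2*L) := by gcongr
    rw [e1] at h1
    linarith [h1, hmono, e3]
  -- telescoping
  have htel : ∀ k ≤ N, g (x 0) ≥ g (x k) + k * (Δ ^ 2 / (2 * L)) := by
    intro k hk
    induction k with
    | zero => simp
    | succ m ih =>
      have hm : m < N := hk
      have := hstep m hm
      have ihm := ih (le_of_lt hm)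
      push_cast
      linarith
  have hN := htel N le_rfl
  have hlbN := hlb (x N)
  have hfinal : (N : ℝ) * (Δ ^ 2 / (2 * L)) ≤ C₁ := by linarith
  have hΔ2 : 0 < Δ ^ 2 := by positivity
  rw [le_div_iff₀ (by rw [hΔdef] at hΔ2; nlinarith [hΔ2] : (0:ℝ) < L₁₂ ^ 2 * γ ^ 2)]
  have : Δ ^ 2 = L₁₂ ^ 2 * γ ^ 2 := by rw [hΔdef]; ring
  rw [← this]
  have h2L : (0:ℝ) < 2 * L := by linarith
  calc (N:ℝ) * Δ ^ 2 = ((N:ℝ) * (Δ ^ 2 / (2 * L))) * (2 * L) := by field_simp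
    _ ≤ C₁ * (2 * L) := by nlinarith [hfinal, h2L]
    _ = 2 * C₁ * L := by ring
end

section
/- Let g be L-smooth, satisfy PL with constant μ₁ > 0 with minimum g*, and let iterates satisfy x_{k+1} = x_k − (1/L)d(x_k) with inexact gradient error Δ. Then for every k ≥ 0: g(x_k) − g* ≤ (1 − μ₁/L)^k·(g(x₀) − g*) + Δ²/(2μ₁). -/
open scoped RealInnerProductSpace

lemma descent {n : ℕ} (g : EuclideanSpace ℝ (Fin n) → ℝ) (L : ℝ)
    (hdiff : Differentiable ℝ g) (hL : 0 < L)
    (hLip : ∀ x y, ‖gradient g x - gradient g y‖ ≤ L * ‖x - y‖)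
    (x y : EuclideanSpace ℝ (Fin n)) :
    g y ≤ g x + ⟪gradient g x, y - x⟫ + L / 2 * ‖y - x‖ ^ 2 := by
  set v := y - x with hv
  have key : ∀ t : ℝ, HasDerivAt (fun t : ℝ => g (x + t • v))
      (⟪gradient g (x + t • v), v⟫) t := by
    intro t
    have h1 : HasFDerivAt g (InnerProductSpace.toDual ℝ _ (gradient g (x + t • v)))
        (x + t • v) := (hdiff _).hasGradientAt.hasFDerivAt
    have h2 : HasDerivAt (fun t : ℝ => x + t • v) v t := by
      simpa using ((hasDerivAt_id t).smul_const v).const_add x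
    have := h1.comp_hasDerivAt t h2
    simpa [InnerProductSpace.toDual_apply_apply, Function.comp_def] using this
  have contgrad : Continuous (gradient g) := by
    have : LipschitzWith (Real.toNNReal L) (gradient g) := by
      apply LipschitzWith.of_dist_le_mul
      intro a b
      simpa [dist_eq_norm, Real.coe_toNNReal L hL.le] using hLip a b
    exact this.continuous
  have cont : Continuous fun t : ℝ => (⟪gradient g (x + t • v), v⟫ : ℝ) := by
    apply Continuous.inner
    · exact contgrad.comp (continuous_const.add (continuous_id.smul continuous_const))
    · exact continuous_const
  have ftc : (∫ t in (0:ℝ)..1, ⟪gradient g (x + t • v), v⟫) = g y - g x := by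
    have := intervalIntegral.integral_eq_sub_of_hasDerivAt
      (f := fun t : ℝ => g (x + t • v)) (fun t _ => key t)
      (cont.intervalIntegrable 0 1)
    simpa [hv] using this
  have hbound : ∀ t ∈ Set.Icc (0:ℝ) 1,
      (⟪gradient g (x + t • v), v⟫ : ℝ) ≤ ⟪gradient g x, v⟫ + L * t * ‖v‖ ^ 2 := by
    intro t ht
    have h1 : (⟪gradient g (x + t • v) - gradient g x, v⟫ : ℝ)
        ≤ ‖gradient g (x + t • v) - gradient g x‖ * ‖v‖ :=
      real_inner_le_norm _ _
    have h2 : ‖gradient g (x + t • v) - gradient g x‖ ≤ L * (t * ‖v‖) := by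
      have := hLip (x + t • v) x
      simpa [norm_smul, abs_of_nonneg ht.1] using this
    have h3 : ‖gradient g (x + t • v) - gradient g x‖ * ‖v‖ ≤ L * t * ‖v‖ ^ 2 := by
      have := mul_le_mul_of_nonneg_right h2 (norm_nonneg v)
      nlinarith [norm_nonneg v]
    have h4 := inner_sub_left (𝕜 := ℝ) (gradient g (x + t • v)) (gradient g x) v
    have := h1.trans h3
    rw [h4] at this
    linarith
  have hint : (∫ t in (0:ℝ)..1, ⟪gradient g (x + t • v), v⟫)
      ≤ ∫ t in (0:ℝ)..1, (⟪gradient g x, v⟫ + L * t * ‖v‖ ^ 2) := by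
    apply intervalIntegral.integral_mono_on zero_le_one
      (cont.intervalIntegrable 0 1)
      ((continuous_const.add ((continuous_const.mul continuous_id).mul continuous_const)).intervalIntegrable 0 1)
    exact hbound
  have hval : (∫ t in (0:ℝ)..1, (⟪gradient g x, v⟫ + L * t * ‖v‖ ^ 2))
      = ⟪gradient g x, v⟫ + L / 2 * ‖v‖ ^ 2 := by
    have h1 : (∫ t in (0:ℝ)..1, (⟪gradient g x, v⟫ : ℝ)) = ⟪gradient g x, v⟫ := by simp
    have h2 : (∫ t in (0:ℝ)..1, L * t * ‖v‖ ^ 2) = L / 2 * ‖v‖ ^ 2 := by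
      have : (fun t : ℝ => L * t * ‖v‖ ^ 2) = fun t : ℝ => (L * ‖v‖ ^ 2) * t := by
        funext t; ring
      rw [this, intervalIntegral.integral_const_mul, integral_id]
      ring
    have hc : Continuous fun t : ℝ => L * t * ‖v‖ ^ 2 := by fun_prop
    rw [intervalIntegral.integral_add (continuous_const.intervalIntegrable 0 1)
      (hc.intervalIntegrable 0 1), h1, h2]
  rw [ftc] at hint
  rw [hval] at hint
  linarith

theorem stmt_7 {n : ℕ} (g : EuclideanSpace ℝ (Fin n) → ℝ) (gstar L μ₁ Δ : ℝ)
    (hdiff : Differentiable ℝ g) (hμ₁ : 0 < μ₁) (hμL : μ₁ ≤ L) (hΔ : 0 ≤ Δ)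
    (hLip : ∀ x y, ‖gradient g x - gradient g y‖ ≤ L * ‖x - y‖)
    (hlb : ∀ x, gstar ≤ g x)
    (hPL : ∀ x, 2 * μ₁ * (g x - gstar) ≤ ‖gradient g x‖ ^ 2)
    (d : EuclideanSpace ℝ (Fin n) → EuclideanSpace ℝ (Fin n))
    (hd : ∀ x, ‖d x - gradient g x‖ ≤ Δ)
    (x : ℕ → EuclideanSpace ℝ (Fin n))
    (hiter : ∀ k, x (k + 1) = x k - (1 / L) • d (x k)) :
    ∀ k, g (x k) - gstar ≤ (1 - μ₁ / L) ^ k * (g (x 0) - gstar) + Δ ^ 2 / (2 * μ₁) := by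
  have hL : 0 < L := lt_of_lt_of_le hμ₁ hμL
  have hstep : ∀ k, g (x (k+1)) - gstar ≤
      (1 - μ₁ / L) * (g (x k) - gstar) + Δ ^ 2 / (2 * L) := by
    intro k
    have hdesc := descent g L hdiff hL hLip (x k) (x (k+1))
    have hxv : x (k+1) - x k = -((1/L) • d (x k)) := by
      rw [hiter k]; abel
    rw [hxv] at hdesc
    set G := gradient g (x k) with hG
    set D := d (x k) with hD
    have e1 : (⟪G, -((1/L) • D)⟫ : ℝ) = -(1/L) * ⟪G, D⟫ := by
      rw [inner_neg_right, real_inner_smul_right]; ring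
    have e2 : ‖-((1/L) • D)‖ ^ 2 = (1/L)^2 * ‖D‖^2 := by
      rw [norm_neg, norm_smul, mul_pow, Real.norm_eq_abs,
        abs_of_pos (by positivity : (0:ℝ) < 1/L)]
    rw [e1, e2] at hdesc
    -- ‖D - G‖² = ‖D‖² - 2⟪G,D⟫ + ‖G‖²
    have e3 : ‖D - G‖^2 = ‖D‖^2 - 2 * ⟪G, D⟫ + ‖G‖^2 := by
      rw [← real_inner_self_eq_norm_sq, inner_sub_sub_self,
          ← real_inner_self_eq_norm_sq, ← real_inner_self_eq_norm_sq,
          real_inner_comm D G]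
      ring
    have e4 : ‖D - G‖^2 ≤ Δ^2 := by
      have := hd (x k)
      nlinarith [norm_nonneg (D - G)]
    have e5 : 2 * μ₁ * (g (x k) - gstar) ≤ ‖G‖^2 := hPL (x k)
    -- hdesc : g x⁺ ≤ g x - (1/L)⟪G,D⟫ + L/2 * (1/L)² ‖D‖²
    have key : g (x (k+1)) ≤ g (x k) + (1/(2*L)) * (‖D - G‖^2 - ‖G‖^2) := by
      rw [e3]
      have hL' : L ≠ 0 := hL.ne'
      calc g (x (k+1)) ≤ g (x k) + (-(1/L) * ⟪G, D⟫) + L/2 * ((1/L)^2 * ‖D‖^2) := hdesc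
        _ = g (x k) + 1/(2*L) * (‖D‖^2 - 2*⟪G,D⟫ + ‖G‖^2 - ‖G‖^2) := by
            field_simp; ring
    have hbΔ : (1/(2*L)) * (‖D - G‖^2 - ‖G‖^2) ≤ Δ^2/(2*L) - (μ₁/L) * (g (x k) - gstar) := by
      have h1 : (0:ℝ) < 1/(2*L) := by positivity
      have := sub_le_sub e4 e5
      calc (1/(2*L)) * (‖D - G‖^2 - ‖G‖^2)
          ≤ (1/(2*L)) * (Δ^2 - 2*μ₁*(g (x k) - gstar)) := by
            apply mul_le_mul_of_nonneg_left _ h1.le; linarith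
        _ = Δ^2/(2*L) - (μ₁/L) * (g (x k) - gstar) := by field_simp
    linarith
  intro k
  induction k with
  | zero => simp [hΔ, hμ₁, div_nonneg, sq_nonneg]
            positivity
  | succ k ih =>
    have hρ0 : 0 ≤ 1 - μ₁ / L := by
      have : μ₁ / L ≤ 1 := (div_le_one hL).mpr hμL
      linarith
    calc g (x (k+1)) - gstar ≤ (1 - μ₁/L) * (g (x k) - gstar) + Δ^2/(2*L) := hstep k
      _ ≤ (1 - μ₁/L) * ((1 - μ₁/L)^k * (g (x 0) - gstar) + Δ^2/(2*μ₁)) + Δ^2/(2*L) :=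
          by nlinarith [ih]
      _ = (1 - μ₁/L)^(k+1) * (g (x 0) - gstar)
            + ((1 - μ₁/L) * (Δ^2/(2*μ₁)) + Δ^2/(2*L)) := by ring
      _ ≤ (1 - μ₁/L)^(k+1) * (g (x 0) - gstar) + Δ^2/(2*μ₁) := by
          have : (1 - μ₁/L) * (Δ^2/(2*μ₁)) + Δ^2/(2*L) = Δ^2/(2*μ₁) := by
            field_simp; ring
          linarith
end

section
/- Under the hypotheses of the previous recurrence (L-smooth, PL with μ₁, inexact gradient with error Δ = L₁₂γ), for any ε > 0, if k ≥ (L/μ₁)·log(2C₁/ε) and L₁₂²γ² ≤ εμ₁, where g(x₀) − g* ≤ C₁, then g(x_k) − g* ≤ ε. -/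
open RealInnerProductSpace

theorem descent8 {n : ℕ} (g : EuclideanSpace ℝ (Fin n) → ℝ) (L : ℝ)
    (hdiff : Differentiable ℝ g)
    (hLip : ∀ x y, ‖gradient g x - gradient g y‖ ≤ L * ‖x - y‖)
    (x y : EuclideanSpace ℝ (Fin n)) :
    g y ≤ g x + ⟪gradient g x, y - x⟫ + L / 2 * ‖y - x‖ ^ 2 := by
  set v := y - x with hv
  set φ : ℝ → ℝ := fun t => g (x + t • v) - t * ⟪gradient g x, v⟫ - L / 2 * t ^ 2 * ‖v‖ ^ 2
    with hφdef
  have hφ : ∀ t : ℝ, HasDerivAt φ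
      (⟪gradient g (x + t • v), v⟫ - ⟪gradient g x, v⟫ - L * t * ‖v‖ ^ 2) t := by
    intro t
    have hc : HasDerivAt (fun t : ℝ => x + t • v) v t := by
      simpa using ((hasDerivAt_id t).smul_const v).const_add x
    have h1 : HasDerivAt (fun t : ℝ => g (x + t • v)) ⟪gradient g (x + t • v), v⟫ t := by
      have := ((hdiff (x + t • v)).hasGradientAt.hasFDerivAt).comp_hasDerivAt t hc
      rw [InnerProductSpace.toDual_apply_apply] at this
      exact this
    have h2 : HasDerivAt (fun t : ℝ => t * ⟪gradient g x, v⟫) ⟪gradient g x, v⟫ t := by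
      simpa using (hasDerivAt_id t).mul_const ⟪gradient g x, v⟫
    have h3 : HasDerivAt (fun t : ℝ => L / 2 * t ^ 2 * ‖v‖ ^ 2) (L * t * ‖v‖ ^ 2) t := by
      have := ((hasDerivAt_pow 2 t).const_mul (L / 2)).mul_const (‖v‖ ^ 2)
      rw [show L * t * ‖v‖ ^ 2 = L / 2 * (((2:ℕ):ℝ) * t ^ (2 - 1)) * ‖v‖ ^ 2 by
        rw [show (2:ℕ) - 1 = 1 from rfl]; push_cast; ring]
      exact this
    exact (h1.sub h2).sub h3
  have hanti : AntitoneOn φ (Set.Icc (0:ℝ) 1) := by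
    apply antitoneOn_of_deriv_nonpos (convex_Icc 0 1)
    · exact Continuous.continuousOn (by
        exact continuous_iff_continuousAt.2 fun t => (hφ t).continuousAt)
    · intro t ht
      exact (hφ t).differentiableAt.differentiableWithinAt
    · intro t ht
      rw [interior_Icc] at ht
      rw [(hφ t).deriv]
      have hineq : ⟪gradient g (x + t • v), v⟫ - ⟪gradient g x, v⟫ ≤ L * t * ‖v‖ ^ 2 := by
        have h1 : ⟪gradient g (x + t • v) - gradient g x, v⟫ ≤
            ‖gradient g (x + t • v) - gradient g x‖ * ‖v‖ := real_inner_le_norm _ _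
        have h2 : ‖gradient g (x + t • v) - gradient g x‖ ≤ L * (t * ‖v‖) := by
          have := hLip (x + t • v) x
          simpa [norm_smul, abs_of_pos ht.1] using this
        have h3 : ‖gradient g (x + t • v) - gradient g x‖ * ‖v‖ ≤ L * (t * ‖v‖) * ‖v‖ :=
          mul_le_mul_of_nonneg_right h2 (norm_nonneg v)
        calc ⟪gradient g (x + t • v), v⟫ - ⟪gradient g x, v⟫
            = ⟪gradient g (x + t • v) - gradient g x, v⟫ := by rw [inner_sub_left]
          _ ≤ L * (t * ‖v‖) * ‖v‖ := le_trans h1 h3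
          _ = L * t * ‖v‖ ^ 2 := by ring
      linarith
  have := hanti (Set.left_mem_Icc.2 zero_le_one) (Set.right_mem_Icc.2 zero_le_one) zero_le_one
  simp only [hφdef] at this
  simp only [zero_smul, add_zero, one_smul] at this
  have hy : x + v = y := by rw [hv]; abel
  rw [hy] at this
  nlinarith [this]

theorem stmt_8 {n : ℕ} (g : EuclideanSpace ℝ (Fin n) → ℝ) (gstar L μ₁ L₁₂ γ C₁ ε : ℝ)
    (hdiff : Differentiable ℝ g) (hμ₁ : 0 < μ₁) (hμL : μ₁ ≤ L)
    (hL₁₂ : 0 < L₁₂) (hγ : 0 < γ) (hC₁ : 0 < C₁) (hε : 0 < ε)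
    (hLip : ∀ x y, ‖gradient g x - gradient g y‖ ≤ L * ‖x - y‖)
    (hlb : ∀ x, gstar ≤ g x)
    (hPL : ∀ x, 2 * μ₁ * (g x - gstar) ≤ ‖gradient g x‖ ^ 2)
    (d : EuclideanSpace ℝ (Fin n) → EuclideanSpace ℝ (Fin n))
    (hd : ∀ x, ‖d x - gradient g x‖ ≤ L₁₂ * γ)
    (x : ℕ → EuclideanSpace ℝ (Fin n))
    (hiter : ∀ k, x (k + 1) = x k - (1 / L) • d (x k))
    (hinit : g (x 0) - gstar ≤ C₁)
    (k : ℕ)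
    (hk : (L / μ₁) * Real.log (2 * C₁ / ε) ≤ (k : ℝ))
    (hγε : L₁₂ ^ 2 * γ ^ 2 ≤ ε * μ₁) :
    g (x k) - gstar ≤ ε := by
  have hL : 0 < L := lt_of_lt_of_le hμ₁ hμL
  set Δ : ℝ := L₁₂ * γ with hΔ
  have hΔpos : 0 < Δ := mul_pos hL₁₂ hγ
  set c : ℝ := 1 / L with hcdef
  have hcpos : 0 < c := by positivity
  have hLc : L * c = 1 := by rw [hcdef]; field_simp
  -- one-step inequality
  have step : ∀ m : ℕ, g (x (m + 1)) - gstar ≤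
      (1 - μ₁ / L) * (g (x m) - gstar) + Δ ^ 2 / (2 * L) := by
    intro m
    set p := x m with hp
    set G := gradient g p with hG
    set D := d p with hD
    have key := descent8 g L hdiff hLip p (x (m + 1))
    have hsub : x (m + 1) - p = -(c • D) := by
      rw [hiter m]; simp [hp, hD]
    have hip : ⟪G, x (m + 1) - p⟫ = -(c * ⟪G, D⟫) := by
      rw [hsub, inner_neg_right, real_inner_smul_right]
    have hnrm : ‖x (m + 1) - p‖ ^ 2 = c ^ 2 * ‖D‖ ^ 2 := by
      rw [hsub, norm_neg, norm_smul, Real.norm_eq_abs, abs_of_pos hcpos]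
      ring
    rw [hip, hnrm] at key
    set e := D - G with he
    have hDe : D = G + e := by rw [he]; abel
    have hexp1 : ⟪G, D⟫ = ‖G‖ ^ 2 + ⟪G, e⟫ := by
      rw [hDe, inner_add_right, real_inner_self_eq_norm_sq]
    have hexp2 : ‖D‖ ^ 2 = ‖G‖ ^ 2 + 2 * ⟪G, e⟫ + ‖e‖ ^ 2 := by
      rw [hDe]; exact norm_add_sq_real G e
    rw [hexp1, hexp2] at key
    have key2 : g (x (m + 1)) ≤ g p - c / 2 * ‖G‖ ^ 2 + c / 2 * ‖e‖ ^ 2 := by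
      have hrw : g p + -(c * (‖G‖ ^ 2 + ⟪G, e⟫)) +
          L / 2 * (c ^ 2 * (‖G‖ ^ 2 + 2 * ⟪G, e⟫ + ‖e‖ ^ 2)) =
          g p - c / 2 * ‖G‖ ^ 2 + c / 2 * ‖e‖ ^ 2 +
          (L * c - 1) * (c * (‖G‖ ^ 2 + 2 * ⟪G, e⟫ + ‖e‖ ^ 2)) / 2 := by ring
      rw [hrw, hLc] at key
      simpa using key
    have hesq : ‖e‖ ^ 2 ≤ Δ ^ 2 := by
      have h := hd p
      nlinarith [norm_nonneg e]
    have hpl := hPL p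
    rw [← hG] at hpl
    have hμc : μ₁ / L = μ₁ * c := by rw [hcdef]; ring
    have hΔc : Δ ^ 2 / (2 * L) = Δ ^ 2 * c / 2 := by rw [hcdef]; field_simp
    rw [hμc, hΔc]
    have hint1 := mul_le_mul_of_nonneg_left hpl (le_of_lt (half_pos hcpos))
    have hint2 := mul_le_mul_of_nonneg_left hesq (le_of_lt (half_pos hcpos))
    clear_value c Δ p G D e
    linarith [key2, hint1, hint2]
  -- induction bound
  set r : ℝ := 1 - μ₁ / L with hr
  have hr0 : 0 ≤ r := by
    rw [hr]
    have : μ₁ / L ≤ 1 := (div_le_one hL).2 hμL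
    linarith
  set B : ℝ := Δ ^ 2 / (2 * μ₁) with hB
  have hBpos : 0 < B := by positivity
  have hBid : r * B + Δ ^ 2 / (2 * L) = B := by
    rw [hr, hB]
    field_simp
    ring
  clear_value c Δ r B
  have hbound : ∀ m : ℕ, g (x m) - gstar ≤ r ^ m * C₁ + B := by
    intro m
    induction m with
    | zero => simpa using le_trans hinit (by linarith)
    | succ m ih =>
        have h1 := step m
        have h2 : r * (g (x m) - gstar) ≤ r * (r ^ m * C₁ + B) :=
          mul_le_mul_of_nonneg_left ih hr0
        calc g (x (m + 1)) - gstar ≤ r * (g (x m) - gstar) + Δ ^ 2 / (2 * L) := h1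
          _ ≤ r * (r ^ m * C₁ + B) + Δ ^ 2 / (2 * L) := by linarith
          _ = r ^ (m + 1) * C₁ + (r * B + Δ ^ 2 / (2 * L)) := by ring
          _ = r ^ (m + 1) * C₁ + B := by rw [hBid]
  -- final estimate
  have hrk : r ^ k ≤ Real.exp (-(μ₁ / L)) ^ k := by
    apply pow_le_pow_left₀ hr0
    have := Real.add_one_le_exp (-(μ₁ / L))
    linarith
  have hexp : Real.exp (-(μ₁ / L)) ^ k = Real.exp ((k : ℝ) * -(μ₁ / L)) := by
    rw [← Real.exp_nat_mul]
  have hlogle : Real.log (2 * C₁ / ε) ≤ (k : ℝ) * (μ₁ / L) := by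
    have h := mul_le_mul_of_nonneg_left hk (le_of_lt (div_pos hμ₁ hL))
    have hid : μ₁ / L * (L / μ₁ * Real.log (2 * C₁ / ε)) = Real.log (2 * C₁ / ε) := by
      field_simp
    rw [hid] at h
    linarith [h]
  have hexple : Real.exp ((k : ℝ) * -(μ₁ / L)) ≤ ε / (2 * C₁) := by
    have hpos : 0 < ε / (2 * C₁) := by positivity
    have hlogeq : Real.log (ε / (2 * C₁)) = -Real.log (2 * C₁ / ε) := by
      rw [← Real.log_inv, inv_div]
    calc Real.exp ((k : ℝ) * -(μ₁ / L)) ≤ Real.exp (Real.log (ε / (2 * C₁))) := by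
          apply Real.exp_le_exp.2
          rw [hlogeq]
          linarith [hlogle]
      _ = ε / (2 * C₁) := Real.exp_log hpos
  have h1 : r ^ k * C₁ ≤ ε / 2 := by
    have : r ^ k ≤ ε / (2 * C₁) := by
      calc r ^ k ≤ Real.exp (-(μ₁ / L)) ^ k := hrk
        _ = Real.exp ((k : ℝ) * -(μ₁ / L)) := hexp
        _ ≤ ε / (2 * C₁) := hexple
    calc r ^ k * C₁ ≤ ε / (2 * C₁) * C₁ := mul_le_mul_of_nonneg_right this hC₁.le
      _ = ε / 2 := by field_simp
  have h2 : B ≤ ε / 2 := by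
    rw [hB, hΔ, div_le_div_iff₀ (by positivity) (by norm_num)]
    linarith [hγε]
  calc g (x k) - gstar ≤ r ^ k * C₁ + B := hbound k
    _ ≤ ε / 2 + ε / 2 := by linarith
    _ = ε := by ring
end

section
/- Every differentiable function f : ℝⁿ → ℝ satisfying the PL condition ‖∇f(x)‖² ≥ 2μ(f(x) − f*) with μ > 0 and attaining its minimum f* on a nonempty solution set S satisfies the quadratic growth condition: f(x) − f* ≥ (μ/2)·dist(x, S)² for all x, where dist(x,S) is the Euclidean distance to S; in particular if the minimizer x* is unique, f(x) − f* ≥ (μ/2)‖x − x*‖². -/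
open InnerProductSpace


lemma descent_aux {n : ℕ} (f : EuclideanSpace ℝ (Fin n) → ℝ) (L : ℝ) (hL0 : 0 ≤ L)
    (hdiff : Differentiable ℝ f)
    (hLip : ∀ x y, ‖gradient f x - gradient f y‖ ≤ L * ‖x - y‖) :
    ∀ x y, f y ≤ f x + inner ℝ (gradient f x) (y - x) + L * ‖y - x‖ ^ 2 := by
  intro x y
  have kfd : ∀ z : EuclideanSpace ℝ (Fin n),
      HasFDerivAt f (toDual ℝ _ (gradient f z)) z := fun z =>
    (hdiff z).hasGradientAt.hasFDerivAt
  have hseg : ∀ z ∈ segment ℝ x y, ‖z - x‖ ≤ ‖y - x‖ := by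
    rintro z ⟨t1, t2, ht1, ht2, hsum, rfl⟩
    have he : t1 • x + t2 • y - x = t2 • (y - x) := by
      have ht1' : t1 = 1 - t2 := by linarith
      rw [ht1']; module
    rw [he, norm_smul]
    simpa [abs_of_nonneg ht2] using
      mul_le_of_le_one_left (norm_nonneg (y - x)) (by linarith : t2 ≤ 1)
  have bound : ∀ z ∈ segment ℝ x y,
      ‖toDual ℝ _ (gradient f z) - toDual ℝ _ (gradient f x)‖ ≤ L * ‖y - x‖ := by
    intro z hz
    rw [← map_sub, LinearIsometryEquiv.norm_map]
    exact (hLip z x).trans (mul_le_mul_of_nonneg_left (hseg z hz) hL0)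
  have key := Convex.norm_image_sub_le_of_norm_hasFDerivWithin_le'
    (f := f) (f' := fun z => toDual ℝ _ (gradient f z)) (φ := toDual ℝ _ (gradient f x))
    (C := L * ‖y - x‖) (s := segment ℝ x y)
    (fun z _ => (kfd z).hasFDerivWithinAt) bound (convex_segment x y)
    (left_mem_segment ℝ x y) (right_mem_segment ℝ x y)
  rw [toDual_apply_apply] at key
  have h1 : f y - f x - inner ℝ (gradient f x) (y - x) ≤ L * ‖y - x‖ * ‖y - x‖ :=
    (le_abs_self _).trans (by simpa [Real.norm_eq_abs] using key)
  nlinarith [h1]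

noncomputable def gdSeq {n : ℕ} (f : EuclideanSpace ℝ (Fin n) → ℝ) (h : ℝ)
    (x0 : EuclideanSpace ℝ (Fin n)) : ℕ → EuclideanSpace ℝ (Fin n)
  | 0 => x0
  | k + 1 => gdSeq f h x0 k - h • gradient f (gdSeq f h x0 k)

set_option maxHeartbeats 2000000 in
lemma per_h {n : ℕ} (f : EuclideanSpace ℝ (Fin n) → ℝ) (fstar L μ : ℝ)
    (hdiff : Differentiable ℝ f) (hL : 0 < L) (hμ : 0 < μ)
    (hdesc : ∀ x y, f y ≤ f x + inner ℝ (gradient f x) (y - x) + L * ‖y - x‖ ^ 2)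
    (hlb : ∀ x, fstar ≤ f x)
    (S : Set (EuclideanSpace ℝ (Fin n)))
    (hS : S = {x | f x = fstar})
    (hPL : ∀ x, 2 * μ * (f x - fstar) ≤ ‖gradient f x‖ ^ 2)
    (h : ℝ) (hh0 : 0 < h) (hh1 : L * h ≤ 1 / 2) (hh2 : μ * h ≤ 1 / 4)
    (x0 : EuclideanSpace ℝ (Fin n)) :
    (1 - L * h) ^ 2 * (μ / 2 * (Metric.infDist x0 S) ^ 2) ≤ f x0 - fstar := by
  set x : ℕ → EuclideanSpace ℝ (Fin n) := gdSeq f h x0 with hx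
  have hx0 : x 0 = x0 := rfl
  have hxs : ∀ k, x (k + 1) = x k - h • gradient f (x k) := fun k => rfl
  set a : ℕ → ℝ := fun k => f (x k) - fstar with ha
  set g : ℕ → EuclideanSpace ℝ (Fin n) := fun k => gradient f (x k) with hg
  set c : ℝ := h * (1 - L * h) with hc
  have hLh : 1 - L * h ≥ 1 / 2 := by nlinarith
  have hc0 : 0 < c := by nlinarith
  have ha0 : ∀ k, 0 ≤ a k := fun k => by simpa [ha] using sub_nonneg.2 (hlb (x k))
  -- step decrease
  have hstep : ∀ k, a (k + 1) ≤ a k - c * ‖g k‖ ^ 2 := by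
    intro k
    have := hdesc (x k) (x (k + 1))
    simp only [ha]
    rw [hxs k] at this
    rw [hxs k]
    have he : x k - h • g k - x k = (-h) • g k := by module
    rw [he] at this
    rw [real_inner_smul_right, norm_smul] at this
    simp only [Real.norm_eq_abs, abs_neg, abs_of_pos hh0] at this
    have hin : (inner ℝ (g k) (g k) : ℝ) = ‖g k‖ ^ 2 := real_inner_self_eq_norm_sq (g k)
    nlinarith [this, norm_nonneg (g k)]
  have hmono : ∀ k, a (k + 1) ≤ a k := fun k =>
    (hstep k).trans (by nlinarith [sq_nonneg ‖g k‖, norm_nonneg (g k)])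
  -- geometric decay
  set q : ℝ := 1 - 2 * μ * c with hq
  have hq0 : 0 ≤ q := by nlinarith
  have hq1 : q < 1 := by nlinarith
  have hdecay : ∀ k, a k ≤ q ^ k * a 0 := by
    intro k
    induction k with
    | zero => simp
    | succ k ih =>
      have h1 : a (k + 1) ≤ q * a k := by
        have h2 := hstep k
        have hpl : 2 * μ * a k ≤ ‖g k‖ ^ 2 := hPL (x k)
        have h3 : c * (2 * μ * a k) ≤ c * ‖g k‖ ^ 2 :=
          mul_le_mul_of_nonneg_left hpl hc0.le
        have : q * a k = a k - c * (2 * μ * a k) := by ring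
        linarith
      calc a (k + 1) ≤ q * a k := h1
        _ ≤ q * (q ^ k * a 0) := by nlinarith [ha0 0]
        _ = q ^ (k + 1) * a 0 := by ring
  -- a tends to 0
  have haten : Filter.Tendsto a Filter.atTop (nhds 0) := by
    have hgeo : Filter.Tendsto (fun k : ℕ => q ^ k * a 0) Filter.atTop (nhds 0) := by
      simpa using (tendsto_pow_atTop_nhds_zero_of_lt_one hq0 hq1).mul_const (a 0)
    exact squeeze_zero ha0 hdecay hgeo
  set b : ℕ → ℝ := fun k => Real.sqrt (a k) with hb
  have hb0 : ∀ k, 0 ≤ b k := fun k => Real.sqrt_nonneg _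
  have hbmono : ∀ k, b (k + 1) ≤ b k := fun k => Real.sqrt_le_sqrt (hmono k)
  set s : ℝ := c * Real.sqrt (μ / 2) with hs
  have hsq : Real.sqrt (μ / 2) ^ 2 = μ / 2 := Real.sq_sqrt (by positivity)
  have hsqpos : 0 < Real.sqrt (μ / 2) := Real.sqrt_pos.2 (by positivity)
  have hs0 : 0 < s := by positivity
  -- per-step length bound
  have hlen : ∀ k, s * ‖g k‖ ≤ b k - b (k + 1) := by
    intro k
    rcases eq_or_ne (‖g k‖) 0 with hgk | hgk
    · rw [hgk, mul_zero]
      exact sub_nonneg.2 (hbmono k)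
    · have hgkpos : 0 < ‖g k‖ := (norm_nonneg _).lt_of_ne (Ne.symm hgk)
      have hdiff2 : c * ‖g k‖ ^ 2 ≤ a k - a (k + 1) := by linarith [hstep k]
      have hcg : 0 < c * ‖g k‖ ^ 2 := mul_pos hc0 (pow_pos hgkpos 2)
      have hakpos : 0 < a k := by linarith [ha0 (k + 1)]
      have hbkpos : 0 < b k := Real.sqrt_pos.2 hakpos
      have hbsq : b k ^ 2 = a k := Real.sq_sqrt (ha0 k)
      have hbsq1 : b (k + 1) ^ 2 = a (k + 1) := Real.sq_sqrt (ha0 (k + 1))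
      -- ‖g k‖ ≥ sqrt(2μ) * b k
      have hgb : Real.sqrt (2 * μ) * b k ≤ ‖g k‖ := by
        have h1 : Real.sqrt (2 * μ * a k) ≤ ‖g k‖ := by
          rw [show ‖g k‖ = Real.sqrt (‖g k‖ ^ 2) from (Real.sqrt_sq (norm_nonneg _)).symm]
          exact Real.sqrt_le_sqrt (hPL (x k))
        rwa [Real.sqrt_mul (by positivity) (a k)] at h1
      have h2mu : Real.sqrt (2 * μ) = 2 * Real.sqrt (μ / 2) := by
        rw [show (2 * μ : ℝ) = 2 ^ 2 * (μ / 2) by ring,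
          Real.sqrt_mul (by positivity), Real.sqrt_sq (by norm_num : (0:ℝ) ≤ 2)]
      have hgb2 : 2 * Real.sqrt (μ / 2) * b k ≤ ‖g k‖ := by rw [← h2mu]; exact hgb
      have key : (b k - b (k + 1)) * (b k + b (k + 1)) = a k - a (k + 1) := by
        linear_combination hbsq - hbsq1
      have m2 : c * ‖g k‖ ^ 2 ≤ (b k - b (k + 1)) * (2 * b k) := by
        have e3 : (b k - b (k + 1)) * (b k + b (k + 1)) ≤ (b k - b (k + 1)) * (2 * b k) :=
          mul_le_mul_of_nonneg_left (by linarith [hbmono k]) (sub_nonneg.2 (hbmono k))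
        linarith [key, hdiff2]
      have m1 : 2 * b k * (s * ‖g k‖) ≤ c * ‖g k‖ ^ 2 := by
        have e1 : 2 * b k * (s * ‖g k‖) = c * ‖g k‖ * (2 * Real.sqrt (μ / 2) * b k) := by
          rw [hs]; ring
        have e2 := mul_le_mul_of_nonneg_left hgb2
          (by positivity : (0:ℝ) ≤ c * ‖g k‖)
        rw [e1]
        exact e2.trans_eq (by ring)
      have m3 : 2 * b k * (s * ‖g k‖) ≤ 2 * b k * (b k - b (k + 1)) :=
        m1.trans (m2.trans_eq (by ring))
      exact le_of_mul_le_mul_left m3 (by positivity)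
  -- telescoping
  have htel : ∀ m p, m ≤ p → s * ‖x p - x m‖ ≤ h * (b m - b p) := by
    intro m p hmp
    induction p, hmp using Nat.le_induction with
    | base => simp
    | succ p hmp ih =>
      have h1 : s * ‖x (p + 1) - x p‖ ≤ h * (b p - b (p + 1)) := by
        rw [hxs p, show x p - h • g p - x p = (-h) • g p from by module, norm_smul]
        simp only [Real.norm_eq_abs, abs_neg, abs_of_pos hh0]
        have := mul_le_mul_of_nonneg_left (hlen p) hh0.le
        linarith [this]
      calc s * ‖x (p + 1) - x m‖ ≤ s * (‖x (p + 1) - x p‖ + ‖x p - x m‖) :=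
            mul_le_mul_of_nonneg_left (norm_sub_le_norm_sub_add_norm_sub _ _ _) hs0.le
        _ = s * ‖x (p + 1) - x p‖ + s * ‖x p - x m‖ := by ring
        _ ≤ h * (b p - b (p + 1)) + h * (b m - b p) := add_le_add h1 ih
        _ = h * (b m - b (p + 1)) := by ring
  -- b tends to 0
  have hbten : Filter.Tendsto b Filter.atTop (nhds 0) := by
    have := (Real.continuous_sqrt.tendsto' 0 0 (by simp)).comp haten
    exact this
  -- x is Cauchy
  have hbd : ∀ m p, m ≤ p → ‖x p - x m‖ ≤ h / s * (b m - b p) := by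
    intro m p hmp
    rw [div_mul_eq_mul_div, le_div_iff₀ hs0]
    have := htel m p hmp
    linarith
  have hcau : CauchySeq x := by
    apply cauchySeq_of_le_tendsto_0 (fun N => 2 * (h / s) * b N) ?_ ?_
    · intro p q N hp hq
      have h1 := hbd N p hp
      have h2 := hbd N q hq
      have hbp := hb0 p
      have hbq := hb0 q
      have hhs : 0 ≤ h / s := by positivity
      calc dist (x p) (x q) ≤ dist (x p) (x N) + dist (x N) (x q) := dist_triangle _ _ _
        _ = ‖x p - x N‖ + ‖x q - x N‖ := by rw [dist_eq_norm, dist_eq_norm']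
        _ ≤ h / s * (b N - b p) + h / s * (b N - b q) := add_le_add h1 h2
        _ ≤ 2 * (h / s) * b N := by
            have e1 : h / s * (b N - b p) ≤ h / s * b N :=
              mul_le_mul_of_nonneg_left (by linarith) hhs
            have e2 : h / s * (b N - b q) ≤ h / s * b N :=
              mul_le_mul_of_nonneg_left (by linarith) hhs
            linarith
    · simpa using (hbten.const_mul (2 * (h / s)))
  obtain ⟨xbar, hxbar⟩ := cauchySeq_tendsto_of_complete hcau
  have hfxbar : f xbar = fstar := by
    have t1 : Filter.Tendsto (fun k => f (x k)) Filter.atTop (nhds (f xbar)) :=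
      (hdiff.continuous.tendsto xbar).comp hxbar
    have t2 : Filter.Tendsto (fun k => f (x k)) Filter.atTop (nhds fstar) := by
      simpa [ha] using haten.add_const fstar
    exact tendsto_nhds_unique t1 t2
  have hxbarS : xbar ∈ S := by rw [hS]; exact hfxbar
  -- distance bound
  have hdistp : ∀ p, dist x0 (x p) ≤ h / s * b 0 := by
    intro p
    have h1 := hbd 0 p (Nat.zero_le p)
    have h2 : ‖x p - x 0‖ ≤ h / s * b 0 :=
      h1.trans (mul_le_mul_of_nonneg_left (by linarith [hb0 p]) (by positivity))
    calc dist x0 (x p) = ‖x p - x 0‖ := by rw [dist_eq_norm', hx0]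
      _ ≤ h / s * b 0 := h2
  have hdlim : dist x0 xbar ≤ h / s * b 0 :=
    le_of_tendsto (Filter.Tendsto.dist tendsto_const_nhds hxbar)
      (Filter.Eventually.of_forall hdistp)
  have hinf : Metric.infDist x0 S ≤ h / s * b 0 :=
    (Metric.infDist_le_dist_of_mem hxbarS).trans hdlim
  -- final algebra
  have hd0 : 0 ≤ Metric.infDist x0 S := Metric.infDist_nonneg
  have hbsq0 : b 0 ^ 2 = a 0 := Real.sq_sqrt (ha0 0)
  have hd2 : (Metric.infDist x0 S) ^ 2 ≤ (h / s) ^ 2 * a 0 := by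
    calc (Metric.infDist x0 S) ^ 2 ≤ (h / s * b 0) ^ 2 := by
          apply pow_le_pow_left₀ hd0 hinf
      _ = (h / s) ^ 2 * a 0 := by rw [mul_pow, hbsq0]
  have hs2 : s ^ 2 = h ^ 2 * (1 - L * h) ^ 2 * (μ / 2) := by
    rw [hs, mul_pow, hsq, hc]; ring
  have hgoal : (1 - L * h) ^ 2 * (μ / 2 * ((h / s) ^ 2 * a 0)) = a 0 := by
    rw [div_pow, hs2]
    field_simp
  have h1 : (1 - L * h) ^ 2 * (μ / 2 * (Metric.infDist x0 S) ^ 2)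
      ≤ (1 - L * h) ^ 2 * (μ / 2 * ((h / s) ^ 2 * a 0)) := by
    apply mul_le_mul_of_nonneg_left _ (by positivity)
    exact mul_le_mul_of_nonneg_left hd2 (by positivity)
  have : f x0 - fstar = a 0 := by simp [ha, hx0]
  rw [this]
  linarith [h1, hgoal.le, hgoal.ge]

theorem stmt_10 {n : ℕ} (f : EuclideanSpace ℝ (Fin n) → ℝ) (fstar L μ : ℝ)
    (hdiff : Differentiable ℝ f) (hL : 0 < L) (hμ : 0 < μ)
    (hLip : ∀ x y, ‖gradient f x - gradient f y‖ ≤ L * ‖x - y‖)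
    (hlb : ∀ x, fstar ≤ f x)
    (S : Set (EuclideanSpace ℝ (Fin n)))
    (hS : S = {x | f x = fstar}) (hSne : S.Nonempty)
    (hPL : ∀ x, 2 * μ * (f x - fstar) ≤ ‖gradient f x‖ ^ 2) :
    (∀ x, μ / 2 * (Metric.infDist x S) ^ 2 ≤ f x - fstar) ∧
    (∀ xstar ∈ S, S = {xstar} → ∀ x, μ / 2 * ‖x - xstar‖ ^ 2 ≤ f x - fstar) := by
  have hdesc := descent_aux f L hL.le hdiff hLip
  have main : ∀ x, μ / 2 * (Metric.infDist x S) ^ 2 ≤ f x - fstar := by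
    intro x
    set d := Metric.infDist x S with hd
    set h0 : ℝ := min (1 / (2 * L)) (1 / (4 * μ)) with hh0def
    have h0pos : 0 < h0 := lt_min (by positivity) (by positivity)
    have key : ∀ j : ℕ, (1 - L * (h0 / (j + 1))) ^ 2 * (μ / 2 * d ^ 2) ≤ f x - fstar := by
      intro j
      have hj1 : (1 : ℝ) ≤ (j : ℝ) + 1 := by exact_mod_cast Nat.one_le_iff_ne_zero.2 (Nat.succ_ne_zero j)
      have h2 : h0 / (j + 1) ≤ h0 := by
        apply div_le_self h0pos.le hj1
      apply per_h f fstar L μ hdiff hL hμ hdesc hlb S hS hPL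
      · positivity
      · calc L * (h0 / (j + 1)) ≤ L * h0 := mul_le_mul_of_nonneg_left h2 hL.le
          _ ≤ L * (1 / (2 * L)) := mul_le_mul_of_nonneg_left (min_le_left _ _) hL.le
          _ = 1 / 2 := by field_simp
      · calc μ * (h0 / (j + 1)) ≤ μ * h0 := mul_le_mul_of_nonneg_left h2 hμ.le
          _ ≤ μ * (1 / (4 * μ)) := mul_le_mul_of_nonneg_left (min_le_right _ _) hμ.le
          _ = 1 / 4 := by field_simp
    have ht : Filter.Tendsto (fun j : ℕ => h0 / ((j : ℝ) + 1)) Filter.atTop (nhds 0) := by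
      have := tendsto_one_div_add_atTop_nhds_zero_nat.const_mul h0
      simpa [div_eq_mul_inv, one_div] using this
    have hcont : Continuous fun t : ℝ => (1 - L * t) ^ 2 * (μ / 2 * d ^ 2) := by continuity
    have hlim : Filter.Tendsto (fun j : ℕ => (1 - L * (h0 / (j + 1))) ^ 2 * (μ / 2 * d ^ 2))
        Filter.atTop (nhds (μ / 2 * d ^ 2)) := by
      have := (hcont.tendsto 0).comp ht
      convert this using 2
      · simp
      · ring
    exact le_of_tendsto hlim (Filter.Eventually.of_forall key)
  refine ⟨main, ?_⟩
  intro xstar _ hSsing x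
  have := main x
  rwa [hSsing, Metric.infDist_singleton, dist_eq_norm] at this
end

section
/- Let F : ℝᵏ × ℝˡ → ℝ be μ-strongly convex in its first argument and μ-strongly concave in its second, with Lipschitz gradient, and let A, B be arbitrary matrices of appropriate sizes. Then f(x, y) := F(Ax, By) satisfies the two-sided PL condition: there exist μ₁, μ₂ > 0 with ‖∇_x f(x,y)‖² ≥ 2μ₁(f(x,y) − min_{x'} f(x',y)) and ‖∇_y f(x,y)‖² ≥ 2μ₂(max_{y'} f(x,y') − f(x,y)) for all (x,y). -/
open InnerProductSpace Set
open scoped RealInnerProductSpace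

lemma aux_grad_comp {E F : Type*} [NormedAddCommGroup E] [InnerProductSpace ℝ E]
    [NormedAddCommGroup F] [InnerProductSpace ℝ F] [CompleteSpace E] [CompleteSpace F]
    (T : E →L[ℝ] F) (g : F → ℝ) (x : E) (hd : DifferentiableAt ℝ g (T x)) :
    HasGradientAt (fun x' => g (T x')) (ContinuousLinearMap.adjoint T (gradient g (T x))) x := by
  have h1 : HasFDerivAt g (toDual ℝ F (gradient g (T x))) (T x) := hd.hasGradientAt.hasFDerivAt
  have h2 := h1.comp x (T.hasFDerivAt (x := x))
  rw [hasGradientAt_iff_hasFDerivAt]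
  convert h2 using 1
  ext v
  simp [toDual_apply_apply, ContinuousLinearMap.adjoint_inner_left]
  ext v
  simp [toDual_apply_apply, ContinuousLinearMap.adjoint_inner_left]
  rfl
  ext v
  simp [toDual_apply_apply, ContinuousLinearMap.adjoint_inner_left]

lemma aux_strong_grad {E : Type*} [NormedAddCommGroup E] [InnerProductSpace ℝ E] [CompleteSpace E]
    {g : E → ℝ} {μ : ℝ} (hg : StrongConvexOn Set.univ μ g) (hd : Differentiable ℝ g)
    (z z' : E) :
    g z + ⟪gradient g z, z' - z⟫_ℝ + μ / 2 * ‖z' - z‖ ^ 2 ≤ g z' := by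
  set d := z' - z with hdd
  have hconv : ConvexOn ℝ Set.univ fun w => g w - μ / 2 * ‖w‖ ^ 2 :=
    strongConvexOn_iff_convex.mp hg
  set h : E → ℝ := fun w => g w - μ / 2 * ‖w‖ ^ 2 with hh
  have hφconv : ConvexOn ℝ Set.univ (fun t : ℝ => h (t • d + z)) := by
    refine ⟨convex_univ, fun t1 _ t2 _ a b ha hb hab => ?_⟩
    have hz : a • z + b • z = z := by rw [← add_smul, hab, one_smul]
    have e : (a • t1 + b • t2) • d + z = a • (t1 • d + z) + b • (t2 • d + z) := by
      rw [smul_add, smul_add, smul_smul, smul_smul, add_add_add_comm, ← add_smul, hz,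
        smul_eq_mul, smul_eq_mul]
    show h ((a • t1 + b • t2) • d + z) ≤ a • h (t1 • d + z) + b • h (t2 • d + z)
    rw [e]
    exact hconv.2 (Set.mem_univ _) (Set.mem_univ _) ha hb hab
  have hγ : HasDerivAt (fun t : ℝ => t • d + z) d 0 := by
    simpa using ((hasDerivAt_id (0 : ℝ)).smul_const d).add_const z
  have h1 : HasFDerivAt g (toDual ℝ E (gradient g z)) ((fun t : ℝ => t • d + z) 0) := by
    simpa using (hd z).hasGradientAt.hasFDerivAt
  have hP1 : HasDerivAt (fun t : ℝ => g (t • d + z)) ⟪gradient g z, d⟫_ℝ 0 := by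
    have := h1.comp_hasDerivAt 0 hγ
    simpa [toDual_apply_apply, Function.comp_def] using this
  have hP2 : HasDerivAt (fun t : ℝ => μ / 2 * ‖t • d + z‖ ^ 2) (μ * ⟪z, d⟫_ℝ) 0 := by
    have e : (fun t : ℝ => μ / 2 * ‖t • d + z‖ ^ 2)
        = fun t : ℝ => μ / 2 * (t ^ 2 * ‖d‖ ^ 2 + 2 * t * ⟪z, d⟫_ℝ + ‖z‖ ^ 2) := by
      funext t
      rw [norm_add_sq_real, norm_smul, real_inner_smul_left, real_inner_comm d z,
        Real.norm_eq_abs, mul_pow, sq_abs]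
      ring
    rw [e]
    have hpoly := ((((hasDerivAt_pow 2 (0 : ℝ)).mul_const (‖d‖ ^ 2)).add
      (((hasDerivAt_id (0 : ℝ)).const_mul 2).mul_const ⟪z, d⟫_ℝ)).add_const
      (‖z‖ ^ 2)).const_mul (μ / 2)
    convert hpoly using 1
    norm_num
    rfl
    rfl
    rfl
    rw [show (2:ℕ) - 1 = 1 from rfl]
    ring
  have hφ : HasDerivAt (fun t : ℝ => h (t • d + z)) (⟪gradient g z, d⟫_ℝ - μ * ⟪z, d⟫_ℝ) 0 :=
    hP1.sub hP2
  have hs := hφconv.le_slope_of_hasDerivAt (Set.mem_univ (0 : ℝ)) (Set.mem_univ 1) one_pos hφ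
  rw [slope_def_field] at hs
  simp only [zero_smul, zero_add, one_smul, sub_zero, div_one, hh] at hs
  have e1 : ‖d‖ ^ 2 = ‖z'‖ ^ 2 - 2 * ⟪z, z'⟫_ℝ + ‖z‖ ^ 2 := by
    rw [hdd, norm_sub_sq_real, real_inner_comm]
  have e2 : ⟪z, d⟫_ℝ = ⟪z, z'⟫_ℝ - ‖z‖ ^ 2 := by
    rw [hdd, inner_sub_right, real_inner_self_eq_norm_sq]
  have e3 : d + z = z' := by rw [hdd]; abel
  rw [e3] at hs
  rw [e2] at hs
  rw [e1]
  linarith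

lemma aux_gradient_neg {E : Type*} [NormedAddCommGroup E] [InnerProductSpace ℝ E]
    [CompleteSpace E] (h : E → ℝ) (x : E) :
    gradient (fun y => -h y) x = -gradient h x := by
  simp only [gradient]
  rw [show (fun y => -h y) = fun y => -(h y) from rfl, fderiv_fun_neg, map_neg]

lemma aux_antilip {E F : Type*} [NormedAddCommGroup E] [InnerProductSpace ℝ E]
    [NormedAddCommGroup F] [InnerProductSpace ℝ F]
    [FiniteDimensional ℝ E] [FiniteDimensional ℝ F] (T : E →L[ℝ] F) :
    ∃ c > (0 : ℝ), ∀ w, w ∈ Set.range T → c * ‖w‖ ≤ ‖ContinuousLinearMap.adjoint T w‖ := by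
  classical
  set V : Submodule ℝ F := LinearMap.range (T : E →ₗ[ℝ] F) with hV
  set φ : V →ₗ[ℝ] E :=
    ((ContinuousLinearMap.adjoint T : F →L[ℝ] E) : F →ₗ[ℝ] E).comp V.subtype with hφ
  have hinj : Function.Injective φ := by
    rw [← LinearMap.ker_eq_bot, Submodule.eq_bot_iff]
    rintro ⟨w, hw⟩ hker
    obtain ⟨a, rfl⟩ := hw
    have h0 : ContinuousLinearMap.adjoint T (T a) = 0 := hker
    have hzero : ⟪T a, T a⟫_ℝ = 0 := by
      rw [← ContinuousLinearMap.adjoint_inner_right, h0, inner_zero_right]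
    exact Subtype.ext (by simpa [inner_self_eq_zero] using hzero)
  let e := (LinearEquiv.ofInjective φ hinj).toContinuousLinearEquiv
  obtain ⟨K, hK⟩ : ∃ K : NNReal, AntilipschitzWith K e := ⟨_, e.antilipschitz⟩
  refine ⟨1 / ((K : ℝ) + 1), by positivity, ?_⟩
  rintro w ⟨a, rfl⟩
  have h2 := hK.le_mul_dist (⟨T a, ⟨a, rfl⟩⟩ : V) 0
  rw [map_zero, dist_zero_right, dist_zero_right] at h2
  have hex : ‖e (⟨T a, ⟨a, rfl⟩⟩ : V)‖ = ‖ContinuousLinearMap.adjoint T (T a)‖ := rfl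
  have hnx : ‖(⟨T a, ⟨a, rfl⟩⟩ : V)‖ = ‖T a‖ := rfl
  rw [hex, hnx] at h2
  rw [div_mul_eq_mul_div, div_le_iff₀ (by positivity)]
  nlinarith [norm_nonneg (ContinuousLinearMap.adjoint T (T a))]

lemma aux_key {nn kk : ℕ} (T : EuclideanSpace ℝ (Fin nn) →L[ℝ] EuclideanSpace ℝ (Fin kk))
    (c μ : ℝ) (hc : 0 < c) (hμ : 0 < μ)
    (hT : ∀ w, w ∈ Set.range T → c * ‖w‖ ≤ ‖ContinuousLinearMap.adjoint T w‖)
    (G : EuclideanSpace ℝ (Fin kk) → ℝ)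
    (hG : StrongConvexOn Set.univ μ G) (hGd : Differentiable ℝ G)
    (g : EuclideanSpace ℝ (Fin nn) → ℝ) (hg : ∀ x, g x = G (T x))
    (x x0 : EuclideanSpace ℝ (Fin nn)) (hx0 : ∀ x', g x0 ≤ g x') :
    2 * (μ * c ^ 2) * (g x - g x0) ≤ ‖gradient g x‖ ^ 2 := by
  classical
  have hgfun : g = fun x' => G (T x') := funext hg
  set w := gradient G (T x) with hw
  have hgrad : gradient g x = ContinuousLinearMap.adjoint T w := by
    rw [hgfun]
    exact (aux_grad_comp T G x (hGd _)).gradient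
  set V : Submodule ℝ (EuclideanSpace ℝ (Fin kk)) := LinearMap.range (T : EuclideanSpace ℝ (Fin nn) →ₗ[ℝ] EuclideanSpace ℝ (Fin kk)) with hV
  set pw : EuclideanSpace ℝ (Fin kk) := (V.orthogonalProjection w : EuclideanSpace ℝ (Fin kk))
    with hpw
  have hker : ∀ v ∈ Vᗮ, ContinuousLinearMap.adjoint T v = 0 := by
    intro v hv
    apply ext_inner_right ℝ
    intro z
    rw [ContinuousLinearMap.adjoint_inner_left, inner_zero_left]
    rw [real_inner_comm]
    exact hv (T z) ⟨z, rfl⟩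
  have hsg := aux_strong_grad hG hGd (T x) (T x0)
  set u : EuclideanSpace ℝ (Fin kk) := T x0 - T x with hu
  have huV : u ∈ V := ⟨x0 - x, by
    show T (x0 - x) = u
    rw [hu, map_sub]⟩
  have hsub : w - pw ∈ Vᗮ := V.sub_starProjection_mem_orthogonal w
  have hpw_inner : ⟪w, u⟫_ℝ = ⟪pw, u⟫_ℝ := by
    have h0 : ⟪u, w - pw⟫_ℝ = 0 := hsub u huV
    rw [inner_sub_right] at h0
    have := real_inner_comm u w
    have := real_inner_comm u pw
    linarith [h0, real_inner_comm u w ▸ h0]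
  have hgap : g x - g x0 ≤ -⟪pw, u⟫_ℝ - μ / 2 * ‖u‖ ^ 2 := by
    rw [← hpw_inner]
    have := hsg
    rw [hg x, hg x0]
    linarith
  have hin : -⟪pw, u⟫_ℝ ≤ ‖pw‖ * ‖u‖ := by
    calc -⟪pw, u⟫_ℝ ≤ |⟪pw, u⟫_ℝ| := neg_le_abs _
    _ ≤ ‖pw‖ * ‖u‖ := abs_real_inner_le_norm _ _
  have step2 : 2 * μ * (g x - g x0) ≤ ‖pw‖ ^ 2 := by
    nlinarith [sq_nonneg (‖pw‖ - μ * ‖u‖), norm_nonneg pw, norm_nonneg u]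
  have hTpw : ContinuousLinearMap.adjoint T w = ContinuousLinearMap.adjoint T pw := by
    have h0 := hker (w - pw) hsub
    rw [map_sub, sub_eq_zero] at h0
    exact h0
  have hpwV : pw ∈ Set.range T := by
    obtain ⟨a, ha⟩ := (V.orthogonalProjection w).2
    exact ⟨a, ha⟩
  have hlow : c * ‖pw‖ ≤ ‖gradient g x‖ := by
    rw [hgrad, hTpw]
    exact hT pw hpwV
  have hsq : (c * ‖pw‖) * (c * ‖pw‖) ≤ ‖gradient g x‖ * ‖gradient g x‖ :=
    mul_self_le_mul_self (by positivity) hlow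
  nlinarith [step2, hsq, norm_nonneg pw, sq_nonneg c]

theorem stmt_17 {k l n m : ℕ}
    (F : EuclideanSpace ℝ (Fin k) → EuclideanSpace ℝ (Fin l) → ℝ) (μ LF : ℝ)
    (hμ : 0 < μ)
    (hsc : ∀ v, StrongConvexOn Set.univ μ fun u => F u v)
    (hscc : ∀ u, StrongConcaveOn Set.univ μ fun v => F u v)
    (hdiff : ∀ v, Differentiable ℝ fun u => F u v)
    (hdiff' : ∀ u, Differentiable ℝ fun v => F u v)
    (hLip : ∀ v, LipschitzWith (Real.toNNReal LF) fun u => gradient (fun u' => F u' v) u)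
    (hLip' : ∀ u, LipschitzWith (Real.toNNReal LF) fun v => gradient (fun v' => F u v') v)
    (A : Matrix (Fin k) (Fin n) ℝ) (B : Matrix (Fin l) (Fin m) ℝ)
    (f : EuclideanSpace ℝ (Fin n) → EuclideanSpace ℝ (Fin m) → ℝ)
    (hf : ∀ x y, f x y = F (Matrix.toEuclideanLin A x) (Matrix.toEuclideanLin B y))
    (hmin : ∀ y, ∃ x, ∀ x', f x y ≤ f x' y)
    (hmax : ∀ x, ∃ y, ∀ y', f x y' ≤ f x y) :
    ∃ μ₁ > (0 : ℝ), ∃ μ₂ > (0 : ℝ), ∀ x y,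
      2 * μ₁ * (f x y - ⨅ x', f x' y) ≤ ‖gradient (fun x' => f x' y) x‖ ^ 2 ∧
      2 * μ₂ * ((⨆ y', f x y') - f x y) ≤ ‖gradient (fun y' => f x y') y‖ ^ 2 := by
  classical
  set TA : EuclideanSpace ℝ (Fin n) →L[ℝ] EuclideanSpace ℝ (Fin k) :=
    LinearMap.toContinuousLinearMap (Matrix.toEuclideanLin A) with hTA
  set TB : EuclideanSpace ℝ (Fin m) →L[ℝ] EuclideanSpace ℝ (Fin l) :=
    LinearMap.toContinuousLinearMap (Matrix.toEuclideanLin B) with hTB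
  obtain ⟨cA, hcA, hA⟩ := aux_antilip TA
  obtain ⟨cB, hcB, hB⟩ := aux_antilip TB
  refine ⟨μ * cA ^ 2, by positivity, μ * cB ^ 2, by positivity, fun x y => ?_⟩
  constructor
  · obtain ⟨x0, hx0⟩ := hmin y
    have hinf : (⨅ x', f x' y) = f x0 y :=
      le_antisymm (ciInf_le ⟨f x0 y, by rintro _ ⟨x', rfl⟩; exact hx0 x'⟩ x0) (le_ciInf hx0)
    rw [hinf]
    exact aux_key TA cA μ hcA hμ hA (fun u => F u (Matrix.toEuclideanLin B y)) (hsc _) (hdiff _)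
      (fun x' => f x' y) (fun x' => by
        show f x' y = F (Matrix.toEuclideanLin A x') (Matrix.toEuclideanLin B y)
        exact hf x' y) x x0 hx0
  · obtain ⟨y0, hy0⟩ := hmax x
    have hsup : (⨆ y', f x y') = f x y0 :=
      le_antisymm (ciSup_le hy0) (le_ciSup ⟨f x y0, by rintro _ ⟨y', rfl⟩; exact hy0 y'⟩ y0)
    rw [hsup]
    have hcc : StrongConvexOn Set.univ μ (fun v => -F (Matrix.toEuclideanLin A x) v) :=
      (hscc (Matrix.toEuclideanLin A x)).neg
    have key := aux_key TB cB μ hcB hμ hB (fun v => -F (Matrix.toEuclideanLin A x) v) hcc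
      ((hdiff' _).neg) (fun y' => -f x y') (fun y' => by
        show -f x y' = -F (Matrix.toEuclideanLin A x) (Matrix.toEuclideanLin B y')
        rw [hf]) y y0
      (fun y' => neg_le_neg (hy0 y'))
    rw [aux_gradient_neg (fun y' => f x y') y, norm_neg] at key
    have e : 2 * (μ * cB ^ 2) * (f x y0 - f x y)
        = 2 * (μ * cB ^ 2) * (-f x y - -f x y0) := by ring
    rw [e]
    exact key
end
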